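/- For every β ≥ 0, h ∈ ℝ, p ∈ (0,1), n ∈ ℕ, every finite Λ ⊂ ℤ³ with B_n ⊂ Λ, and all x, y ∈ Λ, with H := {∃ LR +crossing in B_n ∩ S_1}: Σ_{ω∈{0,1}^{Λ_{(1)}∖{x}}} P_p(ω) ⟨σ_y; I_{H(y,ω)}⟩_{Λ,β,h} ≤ (1−p)^{−1} Σ_{ω∈{0,1}^{Λ_{(1)}∖{y}}} P_p(ω) ⟨σ_y; I_{H(y,ω)}⟩_{Λ,β,h}. -/

import Mathlib

open scoped BigOperators
open Classical Filter MeasureTheory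

namespace Ising

/-- Vertices of the lattice `T×Z` are the points of `ℤ³`. -/
abbrev V : Type := ℤ × ℤ × ℤ

/-- The eight difference vectors defining adjacency in `T×Z`:
`±(1,0,0), ±(0,1,0), ±(1,1,0), ±(0,0,1)`. -/
def dirs : Finset V :=
  {(1,0,0), (-1,0,0), (0,1,0), (0,-1,0), (1,1,0), (-1,-1,0), (0,0,1), (0,0,-1)}

/-- Adjacency in the lattice `T×Z`. -/
def adj (x y : V) : Prop := y - x ∈ dirs

/-- The neighbours of a vertex in `T×Z`. -/
def nbrs (x : V) : Finset V := dirs.image (fun d => x + d)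

/-- Euclidean distance on `ℤ³`. -/
noncomputable def edist (x y : V) : ℝ :=
  Real.sqrt ((((x.1 - y.1) ^ 2 + (x.2.1 - y.2.1) ^ 2 + (x.2.2 - y.2.2) ^ 2 : ℤ) : ℝ))

/-- Spin configurations on all of `ℤ³`; `true` codes `+1` and `false` codes `-1`. -/
abbrev Config : Type := V → Bool

/-- The `±1`-valued spin at a vertex. -/
noncomputable def spin (σ : Config) (x : V) : ℝ := if σ x then 1 else -1

/-- Extension of a configuration on a finite `Λ` by `-1` (i.e. `false`) outside `Λ`. -/
noncomputable def extend (Λ : Finset V) (σ : Λ → Bool) : Config :=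
  fun v => if h : v ∈ Λ then σ ⟨v, h⟩ else false

/-- (Negative of the) Hamiltonian on `Λ` with inverse temperature `β`, boundary
condition `η : V → ℤ` (only values outside `Λ` matter) and field `J : V → ℝ`
(only values on `Λ` matter): the edge sum is over ordered pairs, divided by two. -/
noncomputable def energy (Λ : Finset V) (β : ℝ) (η : V → ℤ) (J : V → ℝ) (σ : Config) : ℝ :=
  β * ((∑ x ∈ Λ, ∑ y ∈ Λ, if adj x y then spin σ x * spin σ y else 0) / 2)
    + β * (∑ x ∈ Λ, ∑ y ∈ nbrs x, if y ∉ Λ then spin σ x * ((η y : ℤ) : ℝ) else 0)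
    + ∑ x ∈ Λ, J x * spin σ x

/-- Boltzmann weight. -/
noncomputable def weight (Λ : Finset V) (β : ℝ) (η : V → ℤ) (J : V → ℝ) (σ : Config) : ℝ :=
  Real.exp (energy Λ β η J σ)

/-- The partition function. -/
noncomputable def Zpart (Λ : Finset V) (β : ℝ) (η : V → ℤ) (J : V → ℝ) : ℝ :=
  ∑ σ : Λ → Bool, weight Λ β η J (extend Λ σ)

/-- The finite-volume Ising probability of an event `A`. -/
noncomputable def prob (Λ : Finset V) (β : ℝ) (η : V → ℤ) (J : V → ℝ) (A : Set Config) : ℝ :=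
  (∑ σ : Λ → Bool, if extend Λ σ ∈ A then weight Λ β η J (extend Λ σ) else 0) / Zpart Λ β η J

/-- Finite-volume expectation `⟨f⟩`. -/
noncomputable def expec (Λ : Finset V) (β : ℝ) (η : V → ℤ) (J : V → ℝ) (f : Config → ℝ) : ℝ :=
  (∑ σ : Λ → Bool, f (extend Λ σ) * weight Λ β η J (extend Λ σ)) / Zpart Λ β η J

/-- Finite-volume covariance `⟨f;g⟩ = ⟨fg⟩ - ⟨f⟩⟨g⟩`. -/
noncomputable def covar (Λ : Finset V) (β : ℝ) (η : V → ℤ) (J : V → ℝ) (f g : Config → ℝ) : ℝ :=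
  expec Λ β η J (fun σ => f σ * g σ) - expec Λ β η J f * expec Λ β η J g

/-- Conditional probability `P(A | B)`. -/
noncomputable def condProb (Λ : Finset V) (β : ℝ) (η : V → ℤ) (J : V → ℝ)
    (A B : Set Config) : ℝ :=
  prob Λ β η J (A ∩ B) / prob Λ β η J B

/-- Indicator function of an event. -/
noncomputable def ind (A : Set Config) : Config → ℝ := fun σ => if σ ∈ A then 1 else 0

/-- The box `B_n = [-n,n]³ ∩ ℤ³`. -/
noncomputable def box (n : ℕ) : Finset V :=
  Finset.Icc (-(n : ℤ)) (n : ℤ) ×ˢ (Finset.Icc (-(n : ℤ)) (n : ℤ) ×ˢ Finset.Icc (-(n : ℤ)) (n : ℤ))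

/-- The translated box `B_m(x) = x + B_m`. -/
noncomputable def boxAt (m : ℕ) (x : V) : Finset V := (box m).image (fun v => x + v)

/-- The (inner) boundary `∂Λ` of a set of vertices. -/
noncomputable def bdry (Λ : Finset V) : Finset V := Λ.filter (fun x => ∃ y ∈ nbrs x, y ∉ Λ)

/-- An event is increasing if it is preserved by raising spins. -/
def Increasing (A : Set Config) : Prop :=
  ∀ σ τ : Config, σ ∈ A → (∀ v, σ v ≤ τ v) → τ ∈ A

/-- `A ∈ F_Δ`: the event `A` is determined by the spins in `Δ`. -/
def DependsOn (A : Set Config) (Δ : Set V) : Prop :=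
  ∀ σ τ : Config, (∀ v ∈ Δ, σ v = τ v) → (σ ∈ A ↔ τ ∈ A)

/-- The event `{A occurs on Δ}`. -/
def occursOn (A : Set Config) (Δ : Set V) : Set Config :=
  {σ | ∀ τ : Config, (∀ v ∈ Δ, τ v = σ v) → τ ∈ A}

/-- `σ^{Δ+}` (for `b = true`) resp. `σ^{Δ-}` (for `b = false`). -/
noncomputable def forceOn (σ : Config) (Δ : Set V) (b : Bool) : Config :=
  fun v => if v ∈ Δ then b else σ v

/-- The event `{Δ is pivotal for A}`. -/
def pivotal (A : Set Config) (Δ : Set V) : Set Config :=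
  {σ | forceOn σ Δ true ∈ A ∧ forceOn σ Δ false ∉ A}

/-- The event `{x is +pivotal for A}`. -/
def plusPivotal (A : Set Config) (x : V) : Set Config :=
  pivotal A {x} ∩ {σ | σ x = true}

/-- The slab `S_k = ℤ² × {0,…,k}`. -/
def slab (k : ℕ) : Set V := {x | 0 ≤ x.2.2 ∧ x.2.2 ≤ (k : ℤ)}

/-- The event `{∃ LR +crossing in B_n ∩ S_k}`: a path of `+` spins inside `B_n ∩ S_k`
meeting both hyperplanes `{x(1) = -n}` and `{x(1) = n}`. -/
def crossing (n k : ℕ) : Set Config :=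
  {σ | ∃ l : List V, l.Chain' adj ∧ (∀ v ∈ l, v ∈ box n ∧ v ∈ slab k ∧ σ v = true) ∧
      (∃ u ∈ l, u.1 = -(n : ℤ)) ∧ (∃ u ∈ l, u.1 = (n : ℤ))}

/-- `Λ_{(1)}`: the vertices of `Λ` with third coordinate `1`. -/
def lamOne (Λ : Finset V) : Finset V := Λ.filter (fun x => x.2.2 = 1)

/-- The Bernoulli(p) weight `P_p(ω) = p^{|ω⁻¹(1)|}(1-p)^{|ω⁻¹(0)|}`. -/
noncomputable def bern (p : ℝ) (Δ : Finset V) (ω : Δ → Bool) : ℝ :=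
  ∏ y : Δ, (if ω y then p else 1 - p)

/-- `ω⁻¹(1)` as a set of vertices. -/
def openSet (Δ : Finset V) (ω : Δ → Bool) : Set V :=
  {v | ∃ h : v ∈ Δ, ω ⟨v, h⟩ = true}

/-- The measure `μ_{Λ,p,h}` of an event `A` (with free boundary conditions,
inverse temperature `β`, vertex-percolation parameter `p` and field `h`). -/
noncomputable def mu (Λ : Finset V) (β p h : ℝ) (A : Set Config) : ℝ :=
  ∑ ω : lamOne Λ → Bool,
    bern p (lamOne Λ) ω *
      prob Λ β (fun _ => 0) (fun _ => h) (occursOn A (slab 0 ∪ openSet (lamOne Λ) ω))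

/-- The field equal to `h + t` on `∂B_m(x) ∩ Λ` and to `h` elsewhere. -/
noncomputable def gfield (Λ : Finset V) (m : ℕ) (x : V) (h t : ℝ) : V → ℝ :=
  fun y => if y ∈ bdry (boxAt m x) ∩ Λ then h + t else h

/-- Characterization of the regime `β ∈ [0, β_c(T×Z))`: exponential decay of the
two-point function at zero field, uniformly in the volume. -/
def expDecay (β : ℝ) : Prop :=
  ∃ C > (0 : ℝ), ∃ c > (0 : ℝ), ∀ Λ : Finset V, ∀ x ∈ Λ, ∀ y ∈ Λ,
    expec Λ β (fun _ => 0) (fun _ => 0) (fun σ => spin σ x * spin σ y)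
      ≤ C * Real.exp (-c * edist x y)

/-- There is a path of spins `b` (in `T×Z`) from `x` to `y` in the configuration `σ`. -/
def pathIn (σ : Config) (b : Bool) (x y : V) : Prop :=
  ∃ l : List V, l.Chain' adj ∧ l.head? = some x ∧ l.getLast? = some y ∧ ∀ v ∈ l, σ v = b

/-- The `b`-cluster of a vertex. -/
def cluster (σ : Config) (b : Bool) (x : V) : Set V := {y | pathIn σ b x y}

/-- The set `{x : σ_x = b}` has exactly one infinite connected component in `T×Z`. -/
def uniqueInfCluster (σ : Config) (b : Bool) : Prop :=
  ∃ x : V, σ x = b ∧ (cluster σ b x).Infinite ∧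
    ∀ y : V, σ y = b → (cluster σ b y).Infinite → cluster σ b y = cluster σ b x

/-- The event `H(x,ω)` resp. `H(y,ω^{(y)})` at the level of open sets:
`{(crossing n 1) occurs on S_0 ∪ S ∪ {x}}`. -/
def Hx (n : ℕ) (S : Set V) (x : V) : Set Config :=
  occursOn (crossing n 1) (slab 0 ∪ S ∪ {x})


/-! ### Auxiliary lemmas -/

section Aux

/-- spins of pointwise inf. -/
lemma extend_inf (Λ : Finset V) (a b : { v // v ∈ Λ } → Bool) (v : V) :
    extend Λ (a ⊓ b) v = (extend Λ a v && extend Λ b v) := by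
  unfold extend
  split
  · show (a ⊓ b) _ = _
    rw [Pi.inf_apply]
    cases a ⟨v, by assumption⟩ <;> cases b ⟨v, by assumption⟩ <;> decide
  · rfl

lemma extend_sup (Λ : Finset V) (a b : { v // v ∈ Λ } → Bool) (v : V) :
    extend Λ (a ⊔ b) v = (extend Λ a v || extend Λ b v) := by
  unfold extend
  split
  · show (a ⊔ b) _ = _
    rw [Pi.sup_apply]
    cases a ⟨v, by assumption⟩ <;> cases b ⟨v, by assumption⟩ <;> decide
  · rfl

lemma spin_bool_add (u w : Bool) :
    (if (u && w) then (1:ℝ) else -1) + (if (u || w) then (1:ℝ) else -1)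
      = (if u then (1:ℝ) else -1) + (if w then (1:ℝ) else -1) := by
  cases u <;> cases w <;> norm_num

lemma spin_bool_super (u1 u2 w1 w2 : Bool) :
    (if u1 then (1:ℝ) else -1) * (if w1 then (1:ℝ) else -1)
      + (if u2 then (1:ℝ) else -1) * (if w2 then (1:ℝ) else -1)
    ≤ (if (u1 && u2) then (1:ℝ) else -1) * (if (w1 && w2) then (1:ℝ) else -1)
      + (if (u1 || u2) then (1:ℝ) else -1) * (if (w1 || w2) then (1:ℝ) else -1) := by
  cases u1 <;> cases u2 <;> cases w1 <;> cases w2 <;> norm_num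

lemma spin_add (Λ : Finset V) (a b : { v // v ∈ Λ } → Bool) (v : V) :
    spin (extend Λ (a ⊓ b)) v + spin (extend Λ (a ⊔ b)) v
      = spin (extend Λ a) v + spin (extend Λ b) v := by
  unfold spin
  rw [extend_inf, extend_sup]
  exact spin_bool_add _ _

lemma spin_super (Λ : Finset V) (a b : { v // v ∈ Λ } → Bool) (v w : V) :
    spin (extend Λ a) v * spin (extend Λ a) w + spin (extend Λ b) v * spin (extend Λ b) w
      ≤ spin (extend Λ (a ⊓ b)) v * spin (extend Λ (a ⊓ b)) w
        + spin (extend Λ (a ⊔ b)) v * spin (extend Λ (a ⊔ b)) w := by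
  unfold spin
  rw [extend_inf, extend_sup, extend_inf, extend_sup]
  exact spin_bool_super _ _ _ _

lemma energy_supermodular (Λ : Finset V) (β : ℝ) (hβ : 0 ≤ β) (η : V → ℤ) (J : V → ℝ)
    (a b : { v // v ∈ Λ } → Bool) :
    energy Λ β η J (extend Λ a) + energy Λ β η J (extend Λ b)
      ≤ energy Λ β η J (extend Λ (a ⊓ b)) + energy Λ β η J (extend Λ (a ⊔ b)) := by
  have hP : (∑ v ∈ Λ, ∑ w ∈ Λ, if adj v w then spin (extend Λ a) v * spin (extend Λ a) w else 0)
      + (∑ v ∈ Λ, ∑ w ∈ Λ, if adj v w then spin (extend Λ b) v * spin (extend Λ b) w else 0)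
      ≤ (∑ v ∈ Λ, ∑ w ∈ Λ, if adj v w then
            spin (extend Λ (a ⊓ b)) v * spin (extend Λ (a ⊓ b)) w else 0)
        + (∑ v ∈ Λ, ∑ w ∈ Λ, if adj v w then
            spin (extend Λ (a ⊔ b)) v * spin (extend Λ (a ⊔ b)) w else 0) := by
    rw [← Finset.sum_add_distrib, ← Finset.sum_add_distrib]
    refine Finset.sum_le_sum fun v _ => ?_
    rw [← Finset.sum_add_distrib, ← Finset.sum_add_distrib]
    refine Finset.sum_le_sum fun w _ => ?_
    by_cases hadj : adj v w
    · simp only [if_pos hadj]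
      exact spin_super Λ a b v w
    · simp [if_neg hadj]
  have hB : (∑ v ∈ Λ, ∑ w ∈ nbrs v, if w ∉ Λ then spin (extend Λ (a ⊓ b)) v * ((η w : ℤ) : ℝ) else 0)
      + (∑ v ∈ Λ, ∑ w ∈ nbrs v, if w ∉ Λ then spin (extend Λ (a ⊔ b)) v * ((η w : ℤ) : ℝ) else 0)
      = (∑ v ∈ Λ, ∑ w ∈ nbrs v, if w ∉ Λ then spin (extend Λ a) v * ((η w : ℤ) : ℝ) else 0)
        + (∑ v ∈ Λ, ∑ w ∈ nbrs v, if w ∉ Λ then spin (extend Λ b) v * ((η w : ℤ) : ℝ) else 0) := by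
    rw [← Finset.sum_add_distrib, ← Finset.sum_add_distrib]
    refine Finset.sum_congr rfl fun v _ => ?_
    rw [← Finset.sum_add_distrib, ← Finset.sum_add_distrib]
    refine Finset.sum_congr rfl fun w _ => ?_
    by_cases hw : w ∉ Λ
    · simp only [if_pos hw, ← add_mul, spin_add]
    · simp [if_neg hw]
  have hF : (∑ v ∈ Λ, J v * spin (extend Λ (a ⊓ b)) v)
      + (∑ v ∈ Λ, J v * spin (extend Λ (a ⊔ b)) v)
      = (∑ v ∈ Λ, J v * spin (extend Λ a) v) + (∑ v ∈ Λ, J v * spin (extend Λ b) v) := by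
    rw [← Finset.sum_add_distrib, ← Finset.sum_add_distrib]
    refine Finset.sum_congr rfl fun v _ => ?_
    rw [← mul_add, ← mul_add, spin_add]
  unfold energy
  nlinarith [hP, hB, hF, hβ]

lemma extend_mono (Λ : Finset V) {a b : { v // v ∈ Λ } → Bool} (hab : a ≤ b) (v : V) :
    extend Λ a v ≤ extend Λ b v := by
  unfold extend
  split
  · exact hab _
  · exact le_refl _

lemma Zpart_pos (Λ : Finset V) (β : ℝ) (η : V → ℤ) (J : V → ℝ) : 0 < Zpart Λ β η J := by
  refine Finset.sum_pos (fun σ _ => Real.exp_pos _) ?_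
  exact Finset.univ_nonempty

/-- FKG: covariances of increasing functions are nonnegative. -/
lemma covar_nonneg (Λ : Finset V) (β : ℝ) (hβ : 0 ≤ β) (η : V → ℤ) (J : V → ℝ)
    (f g : Config → ℝ)
    (hf : ∀ a b : { v // v ∈ Λ } → Bool, a ≤ b → f (extend Λ a) ≤ f (extend Λ b))
    (hg : ∀ a b : { v // v ∈ Λ } → Bool, a ≤ b → g (extend Λ a) ≤ g (extend Λ b)) :
    0 ≤ covar Λ β η J f g := by
  classical
  set μ : ({ v // v ∈ Λ } → Bool) → ℝ := fun s => weight Λ β η J (extend Λ s) with hμdef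
  set F : ({ v // v ∈ Λ } → Bool) → ℝ := fun s => f (extend Λ s) with hFdef
  set G : ({ v // v ∈ Λ } → Bool) → ℝ := fun s => g (extend Λ s) with hGdef
  have hμ0 : (0 : ({ v // v ∈ Λ } → Bool) → ℝ) ≤ μ := fun s => (Real.exp_pos _).le
  have hμsuper : ∀ a b, μ a * μ b ≤ μ (a ⊓ b) * μ (a ⊔ b) := by
    intro a b
    simp only [hμdef]
    unfold weight
    rw [← Real.exp_add, ← Real.exp_add]
    exact Real.exp_le_exp.2 (energy_supermodular Λ β hβ η J a b)
  set cF : ℝ := Finset.univ.inf' Finset.univ_nonempty F with hcF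
  set cG : ℝ := Finset.univ.inf' Finset.univ_nonempty G with hcG
  have hF0 : (0 : ({ v // v ∈ Λ } → Bool) → ℝ) ≤ fun s => F s - cF := by
    intro s; simp only [Pi.zero_apply, sub_nonneg]
    exact Finset.inf'_le _ (Finset.mem_univ s)
  have hG0 : (0 : ({ v // v ∈ Λ } → Bool) → ℝ) ≤ fun s => G s - cG := by
    intro s; simp only [Pi.zero_apply, sub_nonneg]
    exact Finset.inf'_le _ (Finset.mem_univ s)
  have hFm : Monotone (fun s => F s - cF) := fun a b hab => by
    simp only [sub_le_sub_iff_right]; exact hf a b hab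
  have hGm : Monotone (fun s => G s - cG) := fun a b hab => by
    simp only [sub_le_sub_iff_right]; exact hg a b hab
  have hfkg := fkg (fun s => F s - cF) (fun s => G s - cG) μ hμ0 hF0 hG0 hFm hGm hμsuper
  set A : ℝ := ∑ s, μ s with hA
  set B : ℝ := ∑ s, μ s * F s with hB
  set C : ℝ := ∑ s, μ s * G s with hC
  set D : ℝ := ∑ s, μ s * (F s * G s) with hD
  have e1 : (∑ s, μ s * (F s - cF)) = B - cF * A := by
    have : ∀ s : ({ v // v ∈ Λ } → Bool), μ s * (F s - cF) = μ s * F s - cF * μ s :=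
      fun s => by ring
    simp_rw [this, Finset.sum_sub_distrib, ← Finset.mul_sum]
    rfl
  have e2 : (∑ s, μ s * (G s - cG)) = C - cG * A := by
    have : ∀ s : ({ v // v ∈ Λ } → Bool), μ s * (G s - cG) = μ s * G s - cG * μ s :=
      fun s => by ring
    simp_rw [this, Finset.sum_sub_distrib, ← Finset.mul_sum]
    rfl
  have e3 : (∑ s, μ s * ((F s - cF) * (G s - cG)))
      = D - cG * B - cF * C + cF * cG * A := by
    have : ∀ s : ({ v // v ∈ Λ } → Bool), μ s * ((F s - cF) * (G s - cG))
        = μ s * (F s * G s) - cG * (μ s * F s) - cF * (μ s * G s) + cF * cG * μ s :=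
      fun s => by ring
    simp_rw [this, Finset.sum_add_distrib, Finset.sum_sub_distrib, ← Finset.mul_sum]
    rfl
  rw [e1, e2, e3] at hfkg
  have key : B * C ≤ A * D := by nlinarith [hfkg]
  have hZ : 0 < A := by
    rw [hA]; exact Zpart_pos Λ β η J
  have hcovar : covar Λ β η J f g = (A * D - B * C) / (A * A) := by
    unfold covar expec
    have hAZ : Zpart Λ β η J = A := rfl
    have hBB : (∑ σ : { v // v ∈ Λ } → Bool, f (extend Λ σ) * weight Λ β η J (extend Λ σ)) = B := by
      rw [hB]; exact Finset.sum_congr rfl fun s _ => by rw [mul_comm]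
    have hCC : (∑ σ : { v // v ∈ Λ } → Bool, g (extend Λ σ) * weight Λ β η J (extend Λ σ)) = C := by
      rw [hC]; exact Finset.sum_congr rfl fun s _ => by rw [mul_comm]
    have hDD : (∑ σ : { v // v ∈ Λ } → Bool,
        (f (extend Λ σ) * g (extend Λ σ)) * weight Λ β η J (extend Λ σ)) = D := by
      rw [hD]; exact Finset.sum_congr rfl fun s _ => by rw [mul_comm]
    rw [hAZ, hBB, hCC, hDD]
    field_simp
  rw [hcovar]
  apply div_nonneg
  · linarith
  · positivity

/-! ### Increasing events -/

lemma increasing_crossing (n k : ℕ) : Increasing (crossing n k) := by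
  rintro σ τ ⟨l, hchain, hmem, hu, hv⟩ hστ
  refine ⟨l, hchain, fun v hv' => ?_, hu, hv⟩
  obtain ⟨h1, h2, h3⟩ := hmem v hv'
  refine ⟨h1, h2, ?_⟩
  have := hστ v
  rw [h3] at this
  exact le_antisymm (Bool.le_true _) this

lemma increasing_occursOn (A : Set Config) (hA : Increasing A) (Δ : Set V) :
    Increasing (occursOn A Δ) := by
  intro σ τ hσ hστ τ' hτ'
  classical
  set τ₀ : Config := fun v => if v ∈ Δ then σ v else τ' v with hτ₀
  have hτ₀A : τ₀ ∈ A := hσ τ₀ (fun v hv => by simp [hτ₀, hv])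
  refine hA τ₀ τ' hτ₀A fun v => ?_
  by_cases hv : v ∈ Δ
  · simp only [hτ₀, if_pos hv]
    rw [hτ' v hv]
    exact hστ v
  · simp [hτ₀, hv]

lemma increasing_Hx (n : ℕ) (S : Set V) (z : V) : Increasing (Hx n S z) :=
  increasing_occursOn _ (increasing_crossing n 1) _

lemma ind_mono_of_increasing (A : Set Config) (hA : Increasing A) (Λ : Finset V)
    (a b : { v // v ∈ Λ } → Bool) (hab : a ≤ b) : ind A (extend Λ a) ≤ ind A (extend Λ b) := by
  unfold ind
  by_cases hmem : extend Λ a ∈ A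
  · rw [if_pos hmem, if_pos (hA _ _ hmem (extend_mono Λ hab))]
  · rw [if_neg hmem]
    split <;> norm_num

lemma spin_mono (Λ : Finset V) (z : V) (a b : { v // v ∈ Λ } → Bool) (hab : a ≤ b) :
    spin (extend Λ a) z ≤ spin (extend Λ b) z := by
  unfold spin
  have hle := extend_mono Λ hab z
  cases ha : extend Λ a z with
  | false => cases hb : extend Λ b z <;> norm_num
  | true =>
    rw [ha] at hle
    have hb : extend Λ b z = true := le_antisymm (Bool.le_true _) hle
    simp [hb]

/-! ### Marginalizing one site of the Bernoulli field -/

/-- Glue a configuration on `Δ \ {v}` with a value `b` at `v`. -/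
noncomputable def glue (Δ : Finset V) (v : V) (b : Bool)
    (ω : { z // z ∈ Δ \ ({v} : Finset V) } → Bool) : { z // z ∈ Δ } → Bool :=
  fun z => if h : (z : V) = v then b
    else ω ⟨z.1, Finset.mem_sdiff.mpr ⟨z.2, by simp [h]⟩⟩

noncomputable def splitEquiv (Δ : Finset V) (v : V) (hv : v ∈ Δ) :
    ({ z // z ∈ Δ } → Bool) ≃ Bool × ({ z // z ∈ Δ \ ({v} : Finset V) } → Bool) where
  toFun ω := (ω ⟨v, hv⟩, fun z => ω ⟨z.1, (Finset.mem_sdiff.mp z.2).1⟩)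
  invFun x := glue Δ v x.1 x.2
  left_inv ω := by
    funext z
    show glue Δ v (ω ⟨v, hv⟩) (fun w => ω ⟨w.1, (Finset.mem_sdiff.mp w.2).1⟩) z = ω z
    unfold glue
    by_cases hz : (z : V) = v
    · rw [dif_pos hz]
      exact congrArg ω (Subtype.ext hz.symm)
    · rw [dif_neg hz]
  right_inv x := by
    obtain ⟨b, ω⟩ := x
    refine Prod.ext ?_ ?_
    · show glue Δ v b ω ⟨v, hv⟩ = b
      unfold glue
      rw [dif_pos rfl]
    · funext z
      show glue Δ v b ω ⟨z.1, (Finset.mem_sdiff.mp z.2).1⟩ = ω z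
      unfold glue
      have hz : (z : V) ≠ v := by
        have := (Finset.mem_sdiff.mp z.2).2
        simpa using this
      rw [dif_neg hz]

lemma bern_glue (p : ℝ) (Δ : Finset V) (v : V) (hv : v ∈ Δ) (b : Bool)
    (ω : { z // z ∈ Δ \ ({v} : Finset V) } → Bool) :
    bern p Δ (glue Δ v b ω) = (if b then p else 1 - p) * bern p (Δ \ {v}) ω := by
  classical
  unfold bern
  rw [Fintype.prod_eq_mul_prod_compl ⟨v, hv⟩]
  congr 1
  · show (if glue Δ v b ω ⟨v, hv⟩ then p else 1 - p) = _
    unfold glue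
    rw [dif_pos rfl]
  · refine Finset.prod_bij'
      (fun (z : { z // z ∈ Δ }) (hz : z ∈ ({(⟨v, hv⟩ : { z // z ∈ Δ })}ᶜ : Finset _)) =>
        (⟨z.1, Finset.mem_sdiff.mpr ⟨z.2, by
          simp only [Finset.mem_compl, Finset.mem_singleton] at hz
          simp only [Finset.mem_singleton]
          intro hzz
          exact hz (Subtype.ext hzz)⟩⟩ : { z // z ∈ Δ \ ({v} : Finset V) }))
      (fun w _ => ⟨w.1, (Finset.mem_sdiff.mp w.2).1⟩) ?_ ?_ ?_ ?_ ?_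
    · intro z hz
      exact Finset.mem_univ _
    · intro w _
      simp only [Finset.mem_compl, Finset.mem_singleton]
      intro hw
      have : (w : V) = v := congrArg Subtype.val hw
      have h2 := (Finset.mem_sdiff.mp w.2).2
      simp [this] at h2
    · intro z hz
      exact Subtype.ext rfl
    · intro w hw
      exact Subtype.ext rfl
    · intro z hz
      simp only [Finset.mem_compl, Finset.mem_singleton] at hz
      have hzv : (z : V) ≠ v := fun hzz => hz (Subtype.ext hzz)
      have hgl : glue Δ v b ω z
          = ω ⟨(z : V), Finset.mem_sdiff.mpr ⟨z.2, by simp [hzv]⟩⟩ := by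
        unfold glue
        rw [dif_neg hzv]
      rw [hgl]

lemma openSet_glue_true (Δ : Finset V) (v : V) (hv : v ∈ Δ)
    (ω : { z // z ∈ Δ \ ({v} : Finset V) } → Bool) :
    openSet Δ (glue Δ v true ω) = openSet (Δ \ {v}) ω ∪ {v} := by
  ext u
  simp only [openSet, Set.mem_setOf_eq, Set.mem_union, Set.mem_singleton_iff]
  constructor
  · rintro ⟨hu, hω⟩
    by_cases huv : u = v
    · exact Or.inr huv
    · left
      refine ⟨Finset.mem_sdiff.mpr ⟨hu, by simp [huv]⟩, ?_⟩
      unfold glue at hω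
      rw [dif_neg huv] at hω
      exact hω
  · rintro (⟨hu, hω⟩ | huv)
    · have huΔ : u ∈ Δ := (Finset.mem_sdiff.mp hu).1
      have huv : u ≠ v := by
        have := (Finset.mem_sdiff.mp hu).2
        simpa using this
      refine ⟨huΔ, ?_⟩
      show glue Δ v true ω ⟨u, huΔ⟩ = true
      unfold glue
      rw [dif_neg huv]
      exact hω
    · have huΔ : u ∈ Δ := by rw [huv]; exact hv
      refine ⟨huΔ, ?_⟩
      show glue Δ v true ω ⟨u, huΔ⟩ = true
      unfold glue
      rw [dif_pos huv]

lemma openSet_glue_false (Δ : Finset V) (v : V)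
    (ω : { z // z ∈ Δ \ ({v} : Finset V) } → Bool) :
    openSet Δ (glue Δ v false ω) = openSet (Δ \ {v}) ω := by
  ext u
  simp only [openSet, Set.mem_setOf_eq]
  constructor
  · rintro ⟨hu, hω⟩
    by_cases huv : u = v
    · unfold glue at hω
      subst huv
      rw [dif_pos rfl] at hω
      exact absurd hω (by simp)
    · refine ⟨Finset.mem_sdiff.mpr ⟨hu, by simp [huv]⟩, ?_⟩
      unfold glue at hω
      rw [dif_neg huv] at hω
      exact hω
  · rintro ⟨hu, hω⟩
    have huΔ : u ∈ Δ := (Finset.mem_sdiff.mp hu).1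
    have huv : u ≠ v := by
      have := (Finset.mem_sdiff.mp hu).2
      simpa using this
    refine ⟨huΔ, ?_⟩
    show glue Δ v false ω ⟨u, huΔ⟩ = true
    unfold glue
    rw [dif_neg huv]
    exact hω

/-- Marginalizing the Bernoulli field at one site. -/
lemma marg (p : ℝ) (Δ : Finset V) (v : V) (hv : v ∈ Δ) (G : Set V → ℝ) :
    (∑ ω : { z // z ∈ Δ } → Bool, bern p Δ ω * G (openSet Δ ω))
      = ∑ ω : { z // z ∈ Δ \ ({v} : Finset V) } → Bool,
          bern p (Δ \ {v}) ω *
            (p * G (openSet (Δ \ {v}) ω ∪ {v}) + (1 - p) * G (openSet (Δ \ {v}) ω)) := by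
  classical
  rw [← Equiv.sum_comp (splitEquiv Δ v hv).symm
      (fun ω => bern p Δ ω * G (openSet Δ ω))]
  rw [Fintype.sum_prod_type, Fintype.sum_bool]
  rw [← Finset.sum_add_distrib]
  refine Finset.sum_congr rfl fun ω _ => ?_
  show bern p Δ (glue Δ v true ω) * G (openSet Δ (glue Δ v true ω))
      + bern p Δ (glue Δ v false ω) * G (openSet Δ (glue Δ v false ω)) = _
  rw [bern_glue p Δ v hv true ω, bern_glue p Δ v hv false ω,
    openSet_glue_true Δ v hv ω, openSet_glue_false Δ v ω]
  norm_num
  ring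

end Aux

theorem statement11 (β : ℝ) (hβ0 : 0 ≤ β) (h p : ℝ) (hp : p ∈ Set.Ioo (0 : ℝ) 1)
    (n : ℕ) (hn : 0 < n) (Λ : Finset V) (hΛ : box n ⊆ Λ) (x y : V) (hx : x ∈ Λ) (hy : y ∈ Λ) :
    (∑ ω : (lamOne Λ \ {x} : Finset V) → Bool,
        bern p (lamOne Λ \ {x}) ω *
          covar Λ β (fun _ => 0) (fun _ => h) (fun σ => spin σ y)
            (ind (Hx n (openSet (lamOne Λ \ {x}) ω) y)))
      ≤ (1 - p)⁻¹ *
        ∑ ω : (lamOne Λ \ {y} : Finset V) → Bool,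
          bern p (lamOne Λ \ {y}) ω *
            covar Λ β (fun _ => 0) (fun _ => h) (fun σ => spin σ y)
              (ind (Hx n (openSet (lamOne Λ \ {y}) ω) y)) := by
  classical
  obtain ⟨hp0, hp1⟩ := hp
  have h1p : 0 < 1 - p := by linarith
  set G : Set V → ℝ := fun S =>
    covar Λ β (fun _ => 0) (fun _ => h) (fun σ => spin σ y) (ind (Hx n S y)) with hGdef
  have hGnn : ∀ S : Set V, 0 ≤ G S := fun S =>
    covar_nonneg Λ β hβ0 _ _ _ _ (fun a b hab => spin_mono Λ y a b hab)
      (fun a b hab => ind_mono_of_increasing _ (increasing_Hx n S y) Λ a b hab)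
  have hGy : ∀ S : Set V, G (S ∪ {y}) = G S := by
    intro S
    have hset : (slab 0 ∪ (S ∪ {y}) ∪ ({y} : Set V)) = slab 0 ∪ S ∪ {y} := by
      ext u
      simp only [Set.mem_union, Set.mem_singleton_iff]
      tauto
    have hHx : Hx n (S ∪ {y}) y = Hx n S y := by
      unfold Hx
      rw [hset]
    show covar Λ β (fun _ => 0) (fun _ => h) (fun σ => spin σ y) (ind (Hx n (S ∪ {y}) y))
      = covar Λ β (fun _ => 0) (fun _ => h) (fun σ => spin σ y) (ind (Hx n S y))
    rw [hHx]
  have hbern : ∀ (Δ : Finset V) (ω : { z // z ∈ Δ } → Bool), 0 ≤ bern p Δ ω := by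
    intro Δ ω
    unfold bern
    refine Finset.prod_nonneg fun z _ => ?_
    split <;> linarith
  set T : ℝ := ∑ ω : { z // z ∈ (lamOne Λ \ {x}) \ ({y} : Finset V) } → Bool,
    bern p ((lamOne Λ \ {x}) \ {y}) ω * G (openSet ((lamOne Λ \ {x}) \ {y}) ω) with hTdef
  have hTnn : 0 ≤ T :=
    Finset.sum_nonneg fun ω _ => mul_nonneg (hbern _ _) (hGnn _)
  have hDD : (lamOne Λ \ {x}) \ ({y} : Finset V) = (lamOne Λ \ {y}) \ ({x} : Finset V) := by
    rw [sdiff_sdiff_comm]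
  show (∑ ω : { z // z ∈ lamOne Λ \ ({x} : Finset V) } → Bool,
        bern p (lamOne Λ \ {x}) ω * G (openSet (lamOne Λ \ {x}) ω))
      ≤ (1 - p)⁻¹ * ∑ ω : { z // z ∈ lamOne Λ \ ({y} : Finset V) } → Bool,
        bern p (lamOne Λ \ {y}) ω * G (openSet (lamOne Λ \ {y}) ω)
  have hL : (∑ ω : { z // z ∈ lamOne Λ \ ({x} : Finset V) } → Bool,
      bern p (lamOne Λ \ {x}) ω * G (openSet (lamOne Λ \ {x}) ω)) = T := by
    by_cases hyK : y ∈ lamOne Λ \ ({x} : Finset V)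
    · rw [marg p (lamOne Λ \ {x}) y hyK G, hTdef]
      refine Finset.sum_congr rfl fun ω _ => ?_
      rw [hGy]
      ring
    · have hsd : (lamOne Λ \ {x}) \ ({y} : Finset V) = lamOne Λ \ ({x} : Finset V) := by
        ext u
        simp only [Finset.mem_sdiff, Finset.mem_singleton]
        constructor
        · tauto
        · intro hu
          refine ⟨hu, fun h' => hyK ?_⟩
          rw [← h']
          simp only [Finset.mem_sdiff, Finset.mem_singleton]
          exact hu
      rw [hTdef, hsd]
  have hR : (1 - p) * T ≤ ∑ ω : { z // z ∈ lamOne Λ \ ({y} : Finset V) } → Bool,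
      bern p (lamOne Λ \ {y}) ω * G (openSet (lamOne Λ \ {y}) ω) := by
    by_cases hxK : x ∈ lamOne Λ \ ({y} : Finset V)
    · rw [marg p (lamOne Λ \ {y}) x hxK G]
      have hTD : T = ∑ ω : { z // z ∈ (lamOne Λ \ {y}) \ ({x} : Finset V) } → Bool,
          bern p ((lamOne Λ \ {y}) \ {x}) ω * G (openSet ((lamOne Λ \ {y}) \ {x}) ω) := by
        rw [hTdef, hDD]
      rw [hTD, Finset.mul_sum]
      refine Finset.sum_le_sum fun ω _ => ?_
      have hb := hbern ((lamOne Λ \ {y}) \ {x}) ω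
      have hg1 : 0 ≤ bern p ((lamOne Λ \ {y}) \ {x}) ω *
          (p * G (openSet ((lamOne Λ \ {y}) \ {x}) ω ∪ {x})) :=
        mul_nonneg hb (mul_nonneg hp0.le (hGnn _))
      nlinarith [hg1]
    · have hsd : (lamOne Λ \ {y}) \ ({x} : Finset V) = lamOne Λ \ ({y} : Finset V) := by
        ext u
        simp only [Finset.mem_sdiff, Finset.mem_singleton]
        constructor
        · tauto
        · intro hu
          refine ⟨hu, fun h' => hxK ?_⟩
          rw [← h']
          simp only [Finset.mem_sdiff, Finset.mem_singleton]
          exact hu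
      have hTS : T = ∑ ω : { z // z ∈ lamOne Λ \ ({y} : Finset V) } → Bool,
          bern p (lamOne Λ \ {y}) ω * G (openSet (lamOne Λ \ {y}) ω) := by
        rw [hTdef, hDD, hsd]
      rw [← hTS]
      nlinarith [mul_nonneg hp0.le hTnn]
  rw [hL, ← div_eq_inv_mul, le_div_iff₀ h1p]
  linarith [hR]

end Ising
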